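/- Let {R,F} be a compatible pair of Yang–Baxter matrices on V = ℂ^N, ε ∈ {1,−1}, and let α_ε(M) be the matrix over End(V₀) with entries (α_ε(M)^a_b)^i_j = (R^εF)^{ia}_{jb}. Then for every j ≥ 1 the image of the string M_{1̄}M_{2̄}⋯M_{\bar j} under α_ε, viewed as an operator on V₀⊗V₁⊗⋯⊗V_j, equals R₀^ε R₁^ε ⋯ R^ε_{j−1} · F_{j−1}⋯F₁F₀, where R_i (resp. F_i) acts on the tensor factors labelled i and i+1. -/

import Mathlib

open Matrix BigOperators
open scoped Classical

noncomputable section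

/-- Operators on `V^{⊗n}`, `V = ℂ^N`, with entries in `A`. -/
abbrev Op (N n : ℕ) (A : Type*) := Matrix (Fin n → Fin N) (Fin n → Fin N) A

variable {N : ℕ}

/-- Embedding of a two-site operator at tensor factors `i`, `j` (identity elsewhere). -/
def emb2 {A : Type*} [Semiring A] {n : ℕ} (i j : Fin n) (X : Op N 2 A) : Op N n A :=
  fun f g => if ∀ k, k ≠ i → k ≠ j → f k = g k then X ![f i, f j] ![g i, g j] else 0

/-- `X_p`: a two-site operator acting at the adjacent factors `p`, `p+1` (0-based). -/
def opAt {A : Type*} [Semiring A] (n p : ℕ) (X : Op N 2 A) : Op N n A :=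
  if h : p + 1 < n then emb2 ⟨p, Nat.lt_of_succ_lt h⟩ ⟨p + 1, h⟩ X else 1

/-- Embedding of a one-site operator at tensor factor `i`. -/
def emb1 {A : Type*} [Semiring A] {n : ℕ} (i : Fin n) (Z : Matrix (Fin N) (Fin N) A) :
    Op N n A :=
  fun f g => if ∀ k, k ≠ i → f k = g k then Z (f i) (g i) else 0

/-- `Z_p`: a one-site operator acting at factor `p` (0-based). -/
def matAt {A : Type*} [Semiring A] (n p : ℕ) (Z : Matrix (Fin N) (Fin N) A) : Op N n A :=
  if h : p < n then emb1 ⟨p, h⟩ Z else 1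

/-- Partial trace over the factors in `S`, re-embedded with identity on the factors in `S`. -/
def ptr {A : Type*} [Semiring A] {n : ℕ} (S : Finset (Fin n)) (X : Op N n A) : Op N n A :=
  fun f g =>
    if ∀ k ∈ S, f k = g k then
      ∑ h : Fin n → Fin N,
        if ∀ k, k ∉ S → h k = f k then X h (fun k => if k ∈ S then h k else g k) else 0
    else 0

/-- Full trace. -/
def trAll {A : Type*} [Semiring A] {n : ℕ} (X : Op N n A) : A := ∑ f, X f f

/-- Trace over all tensor factors except the factor `0`, yielding an `N×N` matrix. -/
def trRest {n : ℕ} (X : Op N (n + 1) ℂ) : Matrix (Fin N) (Fin N) ℂ :=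
  fun a b => ∑ f : Fin n → Fin N, X (Fin.cons a f) (Fin.cons b f)

/-- The permutation (flip) operator on `V ⊗ V`. -/
def flipP (N : ℕ) : Op N 2 ℂ := fun f g => if f 0 = g 1 ∧ f 1 = g 0 then 1 else 0

/-- `D_R = Tr_(2) Ψ_R`. -/
def Dmat (Ψ : Op N 2 ℂ) : Matrix (Fin N) (Fin N) ℂ := fun a b => ∑ c, Ψ ![a, c] ![b, c]

/-- The product `∏_{k ∈ S} (Dm)_k` of copies of a one-site operator over the factors in `S`. -/
def Dset {n : ℕ} (Dm : Matrix (Fin N) (Fin N) ℂ) (S : Finset (Fin n)) : Op N n ℂ :=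
  fun f g => if ∀ k, k ∉ S → f k = g k then ∏ k ∈ S, Dm (f k) (g k) else 0

/-- `R` is an (invertible) Yang-Baxter matrix. -/
def IsYB (R : Op N 2 ℂ) : Prop :=
  IsUnit R ∧
    opAt 3 0 R * opAt 3 1 R * opAt 3 0 R = opAt 3 1 R * opAt 3 0 R * opAt 3 1 R

/-- `Ψ` is a skew inverse of `R`:  `Tr_(2) R₁ Ψ₂ = Tr_(2) Ψ₁ R₂ = P`. -/
def IsSkewPair (R Ψ : Op N 2 ℂ) : Prop :=
  ptr {1} (opAt 3 0 R * opAt 3 1 Ψ) = emb2 (0 : Fin 3) (2 : Fin 3) (flipP N) ∧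
  ptr {1} (opAt 3 0 Ψ * opAt 3 1 R) = emb2 (0 : Fin 3) (2 : Fin 3) (flipP N)

/-- q-number `(i)_q`. -/
def qnum (q : ℂ) (i : ℕ) : ℂ := (q ^ i - q⁻¹ ^ i) / (q - q⁻¹)

/-- `η = (q−μ)(q⁻¹+μ)/(μ(q−q⁻¹))`. -/
def etaC (q μ : ℂ) : ℂ := (q - μ) * (q⁻¹ + μ) / (μ * (q - q⁻¹))

/-- `K = (q·Id − R)(q⁻¹·Id + R)/(μ(q−q⁻¹))`. -/
def Kmat (q μ : ℂ) (R : Op N 2 ℂ) : Op N 2 ℂ :=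
  (μ * (q - q⁻¹))⁻¹ • ((q • (1 : Op N 2 ℂ) - R) * (q⁻¹ • (1 : Op N 2 ℂ) + R))

/-- Baxterized element `R⁻(x)`. -/
def Rminus (q μ : ℂ) (R : Op N 2 ℂ) (x : ℂ) : Op N 2 ℂ :=
  (1 : Op N 2 ℂ) + ((x - 1) / (q - q⁻¹)) • R + (μ * (x - 1) / (μ + q * x)) • Kmat q μ R

/-- Base conditions on the parameters `q`, `μ`. -/
def ParamOK (q μ : ℂ) : Prop :=
  q ≠ 0 ∧ q ≠ 1 ∧ q ≠ -1 ∧ μ ≠ 0 ∧ μ ≠ q ∧ μ ≠ -q⁻¹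

/-- Conditions `q^{2j} ≠ 1`, `μ ≠ −q^{−2j+3}` for `j = 2, …, k`. -/
def ParamRange (q μ : ℂ) (k : ℕ) : Prop :=
  ∀ j, 2 ≤ j → j ≤ k → q ^ (2 * j) ≠ 1 ∧ μ ≠ -q ^ (3 - 2 * (j : ℤ))

/-- `R` (with inverse `Rinv`) is a BMW-type Yang-Baxter matrix with parameters `q, μ`. -/
def IsBMW (q μ : ℂ) (R Rinv : Op N 2 ℂ) : Prop :=
  R * Rinv = 1 ∧ Rinv * R = 1 ∧
  R * Kmat q μ R = μ • Kmat q μ R ∧ Kmat q μ R * R = μ • Kmat q μ R ∧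
  Kmat q μ R * Kmat q μ R = etaC q μ • Kmat q μ R ∧
  (opAt 3 0 (Kmat q μ R) * opAt 3 1 (Kmat q μ R) * opAt 3 0 (Kmat q μ R)
      = opAt 3 0 (Kmat q μ R)) ∧
  (opAt 3 1 (Kmat q μ R) * opAt 3 0 (Kmat q μ R) * opAt 3 1 (Kmat q μ R)
      = opAt 3 1 (Kmat q μ R)) ∧
  ∀ E E' : Op N 2 ℂ, (E = R ∧ E' = Rinv) ∨ (E = Rinv ∧ E' = R) →
    (opAt 3 0 (Kmat q μ R) * opAt 3 1 E
        = opAt 3 0 (Kmat q μ R) * opAt 3 1 (Kmat q μ R) * opAt 3 0 E' ∧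
     opAt 3 1 (Kmat q μ R) * opAt 3 0 E
        = opAt 3 1 (Kmat q μ R) * opAt 3 0 (Kmat q μ R) * opAt 3 1 E' ∧
     opAt 3 1 E * opAt 3 0 (Kmat q μ R)
        = opAt 3 0 E' * opAt 3 1 (Kmat q μ R) * opAt 3 0 (Kmat q μ R) ∧
     opAt 3 0 E * opAt 3 1 (Kmat q μ R)
        = opAt 3 1 E' * opAt 3 0 (Kmat q μ R) * opAt 3 1 (Kmat q μ R))

/-- q-antisymmetrizer `A^{(m)}` acting on the `m` factors starting at factor `p` (0-based)
of `V^{⊗n}`. -/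
def asym (q μ : ℂ) (R : Op N 2 ℂ) (n : ℕ) : ℕ → ℕ → Op N n ℂ
  | _, 0 => 1
  | _, 1 => 1
  | p, (m + 2) =>
      (q ^ (m + 1) / qnum q (m + 2)) •
        (asym q μ R n p (m + 1) * opAt n (p + m) (Rminus q μ R ((q ^ (2 * (m + 1)))⁻¹)) *
          asym q μ R n p (m + 1))

/-- The contractor `C^{(2i)}` acting on the `2i` factors starting at factor `p` (0-based)
of `V^{⊗n}`; `contr q μ R n p i = C^{(2i)}`. -/
def contr (q μ : ℂ) (R : Op N 2 ℂ) (n : ℕ) : ℕ → ℕ → Op N n ℂ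
  | _, 0 => 1
  | p, 1 => (etaC q μ)⁻¹ • opAt n p (Kmat q μ R)
  | p, (i + 2) =>
      contr q μ R n (p + 1) (i + 1) * opAt n p (Kmat q μ R) *
        opAt n (p + 2 * i + 2) (Kmat q μ R) * contr q μ R n (p + 1) (i + 1)

/-- `R` has height `k`. -/
def HasHeight (q μ : ℂ) (R : Op N 2 ℂ) (k : ℕ) : Prop :=
  2 ≤ k ∧ (∀ i, 2 ≤ i → i ≤ k → asym q μ R k 0 i ≠ 0) ∧
    asym q μ R (k + 1) 1 k * opAt (k + 1) 0 (Rminus q μ R ((q ^ (2 * k))⁻¹)) *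
      asym q μ R (k + 1) 1 k = 0

/-- `R` is of orthogonal type `O(k)`: BMW type, height `k`, `μ = q^{1−k}`, `rk A^{(k)} = 1`. -/
def IsOrth (q μ : ℂ) (R Rinv : Op N 2 ℂ) (k : ℕ) : Prop :=
  IsBMW q μ R Rinv ∧ HasHeight q μ R k ∧ μ = q ^ (1 - (k : ℤ)) ∧
    (asym q μ R k 0 k).rank = 1

/-- `{R,F}` is a compatible pair:  `R₁F₂F₁ = F₂F₁R₂` and `R₂F₁F₂ = F₁F₂R₁`. -/
def CompatPair (R F : Op N 2 ℂ) : Prop :=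
  opAt 3 0 R * opAt 3 1 F * opAt 3 0 F = opAt 3 1 F * opAt 3 0 F * opAt 3 1 R ∧
  opAt 3 1 R * opAt 3 0 F * opAt 3 1 F = opAt 3 0 F * opAt 3 1 F * opAt 3 0 R

/-- Push a numeric operator into an `A`-valued operator. -/
def toA {A : Type*} [Semiring A] [Algebra ℂ A] {n : ℕ} (X : Op N n ℂ) : Op N n A :=
  X.map (algebraMap ℂ A)

/-- The copies `M_{\bar{i+1}}` of a quantum matrix:  `Mbar F Finv M n i = M_{\overline{i+1}}`. -/
def Mbar {A : Type*} [Semiring A] [Algebra ℂ A] (F Finv : Op N 2 ℂ)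
    (M : Matrix (Fin N) (Fin N) A) (n : ℕ) : ℕ → Op N n A
  | 0 => matAt n 0 M
  | (i + 1) => toA (opAt n i F) * Mbar F Finv M n i * toA (opAt n i Finv)

/-- The string `M_{1̄} M_{2̄} ⋯ M_{j̄}`. -/
def Mstr {A : Type*} [Semiring A] [Algebra ℂ A] (F Finv : Op N 2 ℂ)
    (M : Matrix (Fin N) (Fin N) A) (n : ℕ) : ℕ → Op N n A
  | 0 => 1
  | (j + 1) => Mstr F Finv M n j * Mbar F Finv M n j

/-- `M` is a quantum matrix for the pair `{R,F}`. -/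
def IsQMatrix {A : Type*} [Semiring A] [Algebra ℂ A] (R F Finv : Op N 2 ℂ)
    (M : Matrix (Fin N) (Fin N) A) : Prop :=
  toA (opAt 2 0 R) * Mbar F Finv M 2 0 * Mbar F Finv M 2 1 =
    Mbar F Finv M 2 0 * Mbar F Finv M 2 1 * toA (opAt 2 0 R)

/-- The contraction `g = η⁻¹ Tr_{R(1,2)}(M_{1̄}M_{2̄}K₁)`. -/
def qContr (q μ : ℂ) (R F Finv : Op N 2 ℂ) (Dm : Matrix (Fin N) (Fin N) ℂ)
    {A : Type*} [Semiring A] [Algebra ℂ A] (M : Matrix (Fin N) (Fin N) A) : A :=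
  (etaC q μ)⁻¹ •
    trAll (toA (Dset Dm (Finset.univ : Finset (Fin 2))) *
      (Mstr F Finv M 2 2 * toA (opAt 2 0 (Kmat q μ R))))

/-- The elementary sums `e_i = Tr_{R(1,…,i)}(M_{1̄}⋯M_{ī} A^{(i)})`. -/
def elemSum (q μ : ℂ) (R F Finv : Op N 2 ℂ) (Dm : Matrix (Fin N) (Fin N) ℂ)
    {A : Type*} [Semiring A] [Algebra ℂ A] (M : Matrix (Fin N) (Fin N) A) (i : ℕ) : A :=
  trAll (toA (Dset Dm (Finset.univ : Finset (Fin i))) *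
    (Mstr F Finv M i i * toA (asym q μ R i 0 i)))

/-- The increasing string `F₁F₂⋯F_j` (1-based), i.e. positions `0,…,j-1`. -/
def Fstr (n : ℕ) (F : Op N 2 ℂ) : ℕ → Op N n ℂ
  | 0 => 1
  | (j + 1) => Fstr n F j * opAt n j F

/-- The decreasing string `F_j⋯F₂F₁` (1-based), i.e. positions `j-1,…,0`. -/
def FstrDown (n : ℕ) (F : Op N 2 ℂ) : ℕ → Op N n ℂ
  | 0 => 1
  | (j + 1) => opAt n j F * FstrDown n F j

/-- The operator `O`. -/
def Oop (q μ : ℂ) (R Finv : Op N 2 ℂ) (k : ℕ) : Matrix (Fin N) (Fin N) ℂ :=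
  (qnum q k * (1 + q ^ ((2 : ℤ) - (k : ℤ))) / (q + q ^ ((1 : ℤ) - (k : ℤ)))) •
    trRest (asym q μ R (k + 1) 1 k * Fstr (k + 1) Finv k)

/-- The operator `O⁻¹`. -/
def OopInv (q μ : ℂ) (R F : Op N 2 ℂ) (k : ℕ) : Matrix (Fin N) (Fin N) ℂ :=
  (qnum q k * (1 + q ^ ((2 : ℤ) - (k : ℤ))) / (q + q ^ ((1 : ℤ) - (k : ℤ)))) •
    trRest (FstrDown (k + 1) F k * asym q μ R (k + 1) 1 k)

/-- The matrix `G`, `G₁ = Tr_(2,3)(K₂F₁⁻¹F₂⁻¹)`. -/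
def Gmat (q μ : ℂ) (R Finv : Op N 2 ℂ) : Matrix (Fin N) (Fin N) ℂ :=
  trRest (opAt 3 1 (Kmat q μ R) * opAt 3 0 Finv * opAt 3 1 Finv)

/-- The matrix `G⁻¹`, `(G⁻¹)₁ = Tr_(2,3)(F₂F₁K₂)`. -/
def GmatInv (q μ : ℂ) (R F : Op N 2 ℂ) : Matrix (Fin N) (Fin N) ℂ :=
  trRest (opAt 3 1 F * opAt 3 0 F * opAt 3 1 (Kmat q μ R))

/-- The matrix `α_ε(M)` over `End(V₀)` with entries `(α_ε(M)^a_b)^i_j = (R^εF)^{ia}_{jb}`. -/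
def alphaM {N : ℕ} (E F : Op N 2 ℂ) : Matrix (Fin N) (Fin N) (Matrix (Fin N) (Fin N) ℂ) :=
  fun a b => fun i j => (E * F) ![i, a] ![j, b]

/-- Identify an operator on `V₁⊗⋯⊗V_n` with entries in `End(V₀)` with an operator on
`V₀⊗V₁⊗⋯⊗V_n`. -/
def assemble {N n : ℕ} (X : Op N n (Matrix (Fin N) (Fin N) ℂ)) : Op N (n + 1) ℂ :=
  fun f g => X (fun t => f t.succ) (fun t => g t.succ) (f 0) (g 0)

/-! Viewed as an operator on `V₀ ⊗ V₁ ⊗ ⋯ ⊗ V_n`, the substitution `M ↦ α_ε(M)` is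
multiplicative, shifts a numeric factor `X_i` to `X_{i+1}`, and sends `M_{1̄}` to `(R^ε F)_0`.
Hence `α_ε(M_{\overline{i+1}}) = F_i ⋯ F_1 (R^ε F)_0 F_1⁻¹ ⋯ F_i⁻¹`. With `D_i = F_{i-1} ⋯ F_0`,
the braid relation of `F` and the compatibility relation `R^ε_1 F_0 F_1 = F_0 F_1 R^ε_0` (for
`ε = -1` obtained from the one for `R` by inverting) give
`D_i · α_ε(M_{\overline{i+1}}) = R^ε_i D_{i+1}`, and the theorem follows by induction on `j`. -/

theorem mul_eq_mul_of_mul_eq_mul_of_inverses {M : Type*} [Monoid M] {a a' b b' x : M}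
    (ha : a' * a = 1) (hb : b * b' = 1) (h : a * x = x * b) : a' * x = x * b' :=
  calc a' * x = a' * (a * x) * b' := by rw [h, mul_assoc, mul_assoc, hb, mul_one]
    _ = x * b' := by rw [← mul_assoc, ha, one_mul]

namespace Op

variable {A : Type*}

def embed [Zero A] {a n : ℕ} (σ : Fin a → Fin n) (X : Op N a A) : Op N n A :=
  fun f g => if Set.EqOn f g (Set.range σ)ᶜ then X (f ∘ σ) (g ∘ σ) else 0

theorem sum_eqOn_compl_range [AddCommMonoid A] {a n : ℕ} {σ : Fin a → Fin n}
    (hσ : Function.Injective σ) (f : Fin n → Fin N) (G : (Fin a → Fin N) → A) :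
    (∑ h : Fin n → Fin N, if Set.EqOn h f (Set.range σ)ᶜ then G (h ∘ σ) else 0) =
      ∑ u, G u := by
  rw [← Finset.sum_filter]
  refine Finset.sum_nbij' (· ∘ σ) (Function.extend σ · f) (by simp) ?_ ?_ ?_ (by simp)
  · intro u _
    rw [Finset.mem_filter_univ]
    exact fun k hk => Function.extend_apply' _ _ _ fun ⟨t, ht⟩ => hk ⟨t, ht⟩
  · intro h hh
    rw [Finset.mem_filter_univ] at hh
    funext k
    by_cases hk : k ∈ Set.range σ
    · obtain ⟨t, rfl⟩ := hk
      exact hσ.extend_apply _ _ t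
    · rw [Function.extend_apply' _ _ _ fun ⟨t, ht⟩ => hk ⟨t, ht⟩, hh hk]
  · intro u _
    funext t
    exact hσ.extend_apply _ _ t

theorem embed_mul [Semiring A] {a n : ℕ} {σ : Fin a → Fin n} (hσ : Function.Injective σ)
    (X Y : Op N a A) : embed σ (X * Y) = embed σ X * embed σ Y := by
  funext f g
  rw [Matrix.mul_apply]
  by_cases hfg : Set.EqOn f g (Set.range σ)ᶜ
  · have hterm : ∀ h, embed σ X f h * embed σ Y h g =
        if Set.EqOn h f (Set.range σ)ᶜ then X (f ∘ σ) (h ∘ σ) * Y (h ∘ σ) (g ∘ σ) else 0 := by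
      intro h
      by_cases hhf : Set.EqOn h f (Set.range σ)ᶜ
      · rw [embed, embed, if_pos hhf.symm, if_pos (hhf.trans hfg), if_pos hhf]
      · rw [embed, if_neg fun H => hhf H.symm, if_neg hhf, zero_mul]
    simp only [hterm, sum_eqOn_compl_range hσ f fun u => X (f ∘ σ) u * Y u (g ∘ σ)]
    rw [embed, if_pos hfg, Matrix.mul_apply]
  · rw [embed, if_neg hfg]
    refine (Finset.sum_eq_zero fun h _ => ?_).symm
    by_cases hfh : Set.EqOn f h (Set.range σ)ᶜ
    · rw [embed, embed, if_neg fun H => hfg (hfh.trans H), mul_zero]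
    · rw [embed, if_neg hfh, zero_mul]

theorem eq_iff_eqOn_compl_range_and_comp {α β ι : Type*} {σ : ι → α} {f g : α → β} :
    f = g ↔ Set.EqOn f g (Set.range σ)ᶜ ∧ f ∘ σ = g ∘ σ := by
  rw [← Set.eqOn_range, ← Set.eqOn_union, Set.compl_union_self, Set.eqOn_univ]

theorem embed_one [Semiring A] {a n : ℕ} (σ : Fin a → Fin n) :
    embed σ (1 : Op N a A) = 1 := by
  funext f g
  simp only [embed, Matrix.one_apply, eq_iff_eqOn_compl_range_and_comp (σ := σ) (f := f)]
  split_ifs <;> tauto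

theorem embed_embed [Zero A] {a b n : ℕ} {σ : Fin b → Fin n} {τ : Fin a → Fin b}
    (hσ : Function.Injective σ) (X : Op N a A) :
    embed σ (embed τ X) = embed (σ ∘ τ) X := by
  have hcond : ∀ f g : Fin n → Fin N, Set.EqOn f g (Set.range (σ ∘ τ))ᶜ ↔
      Set.EqOn f g (Set.range σ)ᶜ ∧ Set.EqOn (f ∘ σ) (g ∘ σ) (Set.range τ)ᶜ := by
    intro f g
    rw [Set.eqOn_comp_right_iff, Set.range_comp, hσ.compl_image_eq, Set.eqOn_union, and_comm]
  funext f g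
  simp only [embed, hcond, ite_and]
  rfl

theorem embed_mul_embed_of_disjoint [Semiring A] {a b n : ℕ} {σ : Fin a → Fin n}
    {τ : Fin b → Fin n} (hdisj : Disjoint (Set.range σ) (Set.range τ)) (X : Op N a A)
    (Y : Op N b A) :
    embed σ X * embed τ Y = fun f g =>
      if Set.EqOn f g (Set.range σ ∪ Set.range τ)ᶜ then
        X (f ∘ σ) (g ∘ σ) * Y (f ∘ τ) (g ∘ τ) else 0 := by
  funext f g
  -- the only intermediate index that contributes: `g` on the range of `σ`, `f` elsewhere
  set h₀ := (Set.range σ).piecewise g f with hh₀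
  have h₀σ : h₀ ∘ σ = g ∘ σ := funext fun t => Set.piecewise_eq_of_mem _ _ _ ⟨t, rfl⟩
  have h₀τ : h₀ ∘ τ = f ∘ τ :=
    funext fun t => Set.piecewise_eq_of_notMem _ _ _ (hdisj.notMem_of_mem_right ⟨t, rfl⟩)
  have hfh₀ : Set.EqOn f h₀ (Set.range σ)ᶜ := (Set.piecewise_eqOn_compl (s := Set.range σ) g f).symm
  have hh₀g : Set.EqOn h₀ g (Set.range τ)ᶜ ↔ Set.EqOn f g (Set.range σ ∪ Set.range τ)ᶜ := by
    rw [Set.eqOn_piecewise, Set.compl_union, Set.inter_comm (Set.range τ)ᶜ (Set.range σ)ᶜ]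
    exact and_iff_right (Set.eqOn_refl _ _)
  rw [Matrix.mul_apply, Finset.sum_eq_single h₀ ?_ (by simp)]
  · simp only [embed, if_pos hfh₀, h₀σ, h₀τ, hh₀g]
    split_ifs <;> simp
  · intro h _ hne
    simp only [embed]
    split_ifs with hfh hhg <;> try simp
    refine absurd (funext fun k => ?_) hne
    by_cases hk : k ∈ Set.range σ
    · rw [hh₀, Set.piecewise_eq_of_mem _ _ _ hk, hhg (hdisj.notMem_of_mem_left hk)]
    · rw [hh₀, Set.piecewise_eq_of_notMem _ _ _ hk, hfh hk]

theorem embed_mul_comm_of_disjoint [CommSemiring A] {a b n : ℕ} {σ : Fin a → Fin n}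
    {τ : Fin b → Fin n} (hdisj : Disjoint (Set.range σ) (Set.range τ)) (X : Op N a A)
    (Y : Op N b A) : embed σ X * embed τ Y = embed τ Y * embed σ X := by
  rw [embed_mul_embed_of_disjoint hdisj, embed_mul_embed_of_disjoint hdisj.symm]
  funext f g
  simp only [Set.union_comm, mul_comm]

def embedHom [Semiring A] {a n : ℕ} (σ : Fin a → Fin n) (hσ : Function.Injective σ) :
    Op N a A →* Op N n A where
  toFun := embed σ
  map_one' := embed_one σ
  map_mul' := embed_mul hσ

def window {m n : ℕ} (p : ℕ) (h : p + m ≤ n) : Fin m → Fin n := fun t => ⟨p + t, by omega⟩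

theorem window_injective {m n p : ℕ} (h : p + m ≤ n) : Function.Injective (window p h) :=
  fun s t hst => Fin.ext (by simpa [window] using hst)

theorem window_comp_window {m m' n p p' : ℕ} (h : p + m ≤ n) (h' : p' + m' ≤ m) :
    window p h ∘ window p' h' = window (p + p') (by omega) :=
  funext fun t => Fin.ext (by simp [window, add_assoc])

theorem opAt_eq_embed [Semiring A] {n p : ℕ} (h : p + 2 ≤ n) (X : Op N 2 A) :
    opAt n p X = embed (window p h) X := by
  have hrange : ∀ k, k ∈ Set.range (window p h) ↔ k = ⟨p, by omega⟩ ∨ k = ⟨p + 1, h⟩ := by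
    intro k
    simp [window, Fin.exists_fin_two, Fin.ext_iff, eq_comm]
  have hcomp : ∀ f : Fin n → Fin N, f ∘ window p h = ![f ⟨p, by omega⟩, f ⟨p + 1, h⟩] :=
    fun f => funext fun t => by fin_cases t <;> rfl
  rw [opAt, dif_pos (show p + 1 < n by omega)]
  funext f g
  simp only [emb2, embed, Set.EqOn, Set.mem_compl_iff, hrange, not_or, and_imp,
    hcomp]

theorem opAt_mul [Semiring A] (n p : ℕ) (X Y : Op N 2 A) :
    opAt n p (X * Y) = opAt n p X * opAt n p Y := by
  by_cases h : p + 2 ≤ n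
  · simp only [opAt_eq_embed h, embed_mul (window_injective h)]
  · simp only [opAt, dif_neg (show ¬p + 1 < n by omega), mul_one]

theorem opAt_one [Semiring A] (n p : ℕ) : opAt n p (1 : Op N 2 A) = 1 := by
  by_cases h : p + 2 ≤ n
  · rw [opAt_eq_embed h, embed_one]
  · rw [opAt, dif_neg (show ¬p + 1 < n by omega)]

theorem commute_opAt_opAt [CommSemiring A] {n p q : ℕ} (hpq : p + 2 ≤ q) (X Y : Op N 2 A) :
    Commute (opAt n p X) (opAt n q Y) := by
  by_cases hq : q + 2 ≤ n
  · rw [opAt_eq_embed (by omega : p + 2 ≤ n), opAt_eq_embed hq]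
    refine embed_mul_comm_of_disjoint (Set.disjoint_left.mpr ?_) X Y
    rintro _ ⟨s, rfl⟩ ⟨t, ht⟩
    have := congrArg Fin.val ht
    simp only [window] at this
    omega
  · have hY : opAt n q Y = 1 := dif_neg (by omega)
    rw [hY]
    exact Commute.one_right _

theorem embed_window_opAt [Semiring A] {m n p i : ℕ} (h : p + m ≤ n) (hi : i + 2 ≤ m)
    (X : Op N 2 A) : embed (window p h) (opAt m i X) = opAt n (p + i) X := by
  rw [opAt_eq_embed hi, embed_embed (window_injective h), window_comp_window,
    opAt_eq_embed]

theorem opAt_mul_mul_eq_of_three [Semiring A] {n p : ℕ} (h : p + 3 ≤ n)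
    {X Y Z X' Y' Z' : Op N 2 A}
    (hXYZ : opAt 3 0 X * opAt 3 1 Y * opAt 3 0 Z = opAt 3 1 X' * opAt 3 0 Y' * opAt 3 1 Z') :
    opAt n p X * opAt n (p + 1) Y * opAt n p Z =
      opAt n (p + 1) X' * opAt n p Y' * opAt n (p + 1) Z' := by
  simpa only [map_mul, embedHom, MonoidHom.coe_mk, OneHom.coe_mk, add_zero,
    embed_window_opAt h (by norm_num : 0 + 2 ≤ 3), embed_window_opAt h (by norm_num : 1 + 2 ≤ 3)]
    using congrArg (embedHom (window p h) (window_injective h)) hXYZ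

end Op

section Assemble

open Op

def assembleRingEquiv (n : ℕ) : Op N n (Matrix (Fin N) (Fin N) ℂ) ≃+* Op N (n + 1) ℂ :=
  (Matrix.compRingEquiv _ _ ℂ).trans
    (Matrix.reindexRingEquiv ℂ ((Equiv.prodComm _ _).trans (Fin.consEquiv fun _ => Fin N)))

theorem assembleRingEquiv_apply {n : ℕ} (X : Op N n (Matrix (Fin N) (Fin N) ℂ)) :
    assembleRingEquiv n X = assemble X := rfl

theorem assemble_mul {n : ℕ} (X Y : Op N n (Matrix (Fin N) (Fin N) ℂ)) :
    assemble (X * Y) = assemble X * assemble Y := by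
  simp only [← assembleRingEquiv_apply, map_mul]

theorem assemble_one {n : ℕ} : assemble (1 : Op N n (Matrix (Fin N) (Fin N) ℂ)) = 1 := by
  rw [← assembleRingEquiv_apply, map_one]

theorem assemble_toA {n : ℕ} (Z : Op N n ℂ) :
    assemble (toA Z : Op N n (Matrix (Fin N) (Fin N) ℂ)) = embed Fin.succ Z := by
  funext f g
  simp only [assemble, toA, embed, Matrix.map_apply, Matrix.algebraMap_matrix_apply,
    Fin.range_succ, compl_compl, Set.eqOn_singleton]
  rfl

theorem assemble_toA_opAt {n p : ℕ} (X : Op N 2 ℂ) :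
    assemble (toA (opAt n p X) : Op N n (Matrix (Fin N) (Fin N) ℂ)) = opAt (n + 1) (p + 1) X := by
  rw [assemble_toA]
  by_cases h : p + 2 ≤ n
  · have hsucc : (Fin.succ : Fin n → Fin (n + 1)) = window 1 (by omega) :=
      funext fun t => Fin.ext (by simp [window, add_comm])
    rw [hsucc, embed_window_opAt _ h, Nat.add_comm 1 p]
  · rw [opAt, dif_neg (show ¬p + 1 < n by omega), embed_one, opAt, dif_neg (by omega)]

theorem assemble_matAt_alphaM {n : ℕ} (hn : 1 ≤ n) (E F : Op N 2 ℂ) :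
    assemble (matAt n 0 (alphaM E F)) = opAt (n + 1) 0 (E * F) := by
  obtain ⟨m, rfl⟩ := Nat.exists_eq_add_of_le' hn
  have hcond : ∀ f g : Fin (m + 2) → Fin N,
      (∀ k : Fin (m + 1), k ≠ 0 → f k.succ = g k.succ) ↔
        ∀ k : Fin (m + 2), k ≠ 0 → k ≠ 1 → f k = g k := by
    intro f g
    constructor
    · intro h k
      refine Fin.cases (absurd rfl) (fun i _ hi => h i ?_) k
      rintro rfl
      exact hi Fin.succ_zero_eq_one
    · intro h k hk
      exact h k.succ (Fin.succ_ne_zero k) (by rwa [← Fin.succ_zero_eq_one, Ne, Fin.succ_inj])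
  funext f g
  simp only [assemble, matAt, emb1, opAt, emb2, dif_pos (Nat.succ_pos _),
    dif_pos (Nat.succ_lt_succ (Nat.succ_pos m))]
  split_ifs with h₁ h₂ h₂
  · rfl
  · exact absurd ((hcond f g).mp h₁) h₂
  · exact absurd ((hcond f g).mpr h₂) h₁
  · rfl

end Assemble

section Strings

open Op

theorem commute_FstrDown_opAt {n i q : ℕ} (F Y : Op N 2 ℂ) (hiq : i ≤ q) :
    Commute (FstrDown n F i) (opAt n (q + 1) Y) := by
  induction i with
  | zero => exact Commute.one_left _
  | succ i ih => exact (commute_opAt_opAt (by omega) F Y).mul_left (ih (by omega))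

theorem FstrDown_mul_assemble_Mbar {n : ℕ} {E F Finv : Op N 2 ℂ}
    (hFbraid : opAt 3 0 F * opAt 3 1 F * opAt 3 0 F = opAt 3 1 F * opAt 3 0 F * opAt 3 1 F)
    (hEF : opAt 3 1 E * opAt 3 0 F * opAt 3 1 F = opAt 3 0 F * opAt 3 1 F * opAt 3 0 E)
    (hFinv : F * Finv = 1) {i : ℕ} (hi : i + 1 ≤ n) :
    FstrDown (n + 1) F i * assemble (Mbar F Finv (alphaM E F) n i) =
      opAt (n + 1) i E * FstrDown (n + 1) F (i + 1) := by
  induction i with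
  | zero =>
    simp only [FstrDown, Mbar, assemble_matAt_alphaM hi, opAt_mul, one_mul, mul_one]
  | succ i ih =>
    have ih := ih (by omega)
    simp only [Mbar, FstrDown, assemble_mul, assemble_toA_opAt] at ih ⊢
    set D := FstrDown (n + 1) F i
    set Fi := opAt (n + 1) i F
    set Fi' := opAt (n + 1) (i + 1) F
    set Ei := opAt (n + 1) i E
    set Ei' := opAt (n + 1) (i + 1) E
    set Finv' := opAt (n + 1) (i + 1) Finv
    have hD : Commute D Fi' := commute_FstrDown_opAt F F le_rfl
    have hD' : Commute D Finv' := commute_FstrDown_opAt F Finv le_rfl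
    have hbraid : Fi * Fi' * Fi = Fi' * Fi * Fi' := opAt_mul_mul_eq_of_three (by omega) hFbraid
    have hcompat : Fi * Fi' * Ei = Ei' * Fi * Fi' := opAt_mul_mul_eq_of_three (by omega) hEF.symm
    have hinv : Fi' * Finv' = 1 := by rw [← opAt_mul, hFinv, opAt_one]
    calc Fi * D * (Fi' * assemble (Mbar F Finv (alphaM E F) n i) * Finv')
        = Fi * Fi' * (D * assemble (Mbar F Finv (alphaM E F) n i)) * Finv' := by
          simp only [mul_assoc, hD.left_comm]
      _ = Fi * Fi' * Ei * Fi * Finv' * D := by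
          rw [ih]
          simp only [mul_assoc, hD'.eq]
      _ = Ei' * (Fi' * Fi * Fi') * Finv' * D := by
          rw [hcompat, ← hbraid]
          simp only [mul_assoc]
      _ = Ei' * (Fi' * (Fi * D)) := by
          simp only [mul_assoc]
          rw [← mul_assoc Fi' Finv', hinv, one_mul]

theorem assemble_Mstr {n : ℕ} {E F Finv : Op N 2 ℂ}
    (hFbraid : opAt 3 0 F * opAt 3 1 F * opAt 3 0 F = opAt 3 1 F * opAt 3 0 F * opAt 3 1 F)
    (hEF : opAt 3 1 E * opAt 3 0 F * opAt 3 1 F = opAt 3 0 F * opAt 3 1 F * opAt 3 0 E)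
    (hFinv : F * Finv = 1) {j : ℕ} (hj : j ≤ n) :
    assemble (Mstr F Finv (alphaM E F) n j) = Fstr (n + 1) E j * FstrDown (n + 1) F j := by
  induction j with
  | zero => simp only [Mstr, Fstr, FstrDown, assemble_one, mul_one]
  | succ j ih =>
    rw [Mstr, assemble_mul, ih (by omega), mul_assoc,
      FstrDown_mul_assemble_Mbar hFbraid hEF hFinv hj, Fstr, mul_assoc]

end Strings

theorem alpha_image_of_string_general
    {N : ℕ} (R Rinv F Finv : Op N 2 ℂ)
    (hFyb : IsYB F)
    (hR : R * Rinv = 1) (hR' : Rinv * R = 1)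
    (hF : F * Finv = 1)
    (hcomp : CompatPair R F) :
    ∀ j : ℕ, 1 ≤ j → ∀ E : Op N 2 ℂ, E = R ∨ E = Rinv →
      assemble (Mstr F Finv (alphaM E F) j j) =
        Fstr (j + 1) E j * FstrDown (j + 1) F j := by
  intro j _ E hE
  have hEF : opAt 3 1 E * opAt 3 0 F * opAt 3 1 F = opAt 3 0 F * opAt 3 1 F * opAt 3 0 E := by
    rcases hE with rfl | rfl
    · exact hcomp.2
    · have hRF := hcomp.2
      rw [mul_assoc] at hRF ⊢
      refine mul_eq_mul_of_mul_eq_mul_of_inverses ?_ ?_ hRF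
      · rw [← Op.opAt_mul, hR', Op.opAt_one]
      · rw [← Op.opAt_mul, hR, Op.opAt_one]
  exact assemble_Mstr hFyb.2 hEF hF le_rfl

/-- Lemma 4.20: the image of the string `M_{1̄}M_{2̄}⋯M_{j̄}` under the
representation `α_ε` equals `R₀^εR₁^ε⋯R^ε_{j−1}·F_{j−1}⋯F₁F₀` on `V₀⊗V₁⊗⋯⊗V_j`. -/
theorem alpha_image_of_string
    {N : ℕ} (R Rinv F Finv : Op N 2 ℂ)
    (hRyb : IsYB R) (hFyb : IsYB F)
    (hR : R * Rinv = 1) (hR' : Rinv * R = 1)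
    (hF : F * Finv = 1) (hF' : Finv * F = 1)
    (hcomp : CompatPair R F) :
    ∀ j : ℕ, 1 ≤ j → ∀ E : Op N 2 ℂ, E = R ∨ E = Rinv →
      assemble (Mstr F Finv (alphaM E F) j j) =
        Fstr (j + 1) E j * FstrDown (j + 1) F j :=
  alpha_image_of_string_general R Rinv F Finv hFyb hR hR' hF hcomp
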